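/- Let M be a real m×n matrix with singular value decomposition M = [U_1 U_2]·diag(Σ_1, Σ_2)·[V_1 V_2]^*, where Σ_1 is the r×r diagonal matrix of the r largest singular values of M and the columns of V_1 are the corresponding r top right singular vectors. Let H be an n×l matrix with ||H||_2 ≤ 1, write C_1 = V_1^*H and C_2 = V_2^*H, and assume rank(C_1) = r. Let XY = MH(MH)^+M be the orthogonal projection of M onto the column space of MH. Then ||M − XY||² ≤ ||Σ_2||² + ||Σ_2 C_2 C_1^+||², where ||·|| denotes either the spectral norm or the Frobenius norm (the inequality holds for both norms). -/

import Mathlib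

/-!
Full row rank of `C₁ = V₁ᵀH` gives `C₁C₁⁺ = 1`, and then the SVD rearranges to
`M = MH·(C₁⁺V₁ᵀ) + U₂G` with `G = Σ₂V₂ᵀ - KV₁ᵀ` and `K = Σ₂C₂C₁⁺`.
The first summand lies in the column space of `MH`, so it is annihilated by `1 - P` for the
orthogonal projection `P = MH(MH)⁺`, and the residual is `(1 - P)U₂G`. Neither `1 - P` nor the
isometry `U₂` increases the spectral or the Frobenius norm, and orthonormality of `V₁, V₂` gives
`GGᵀ = Σ₂Σ₂ᵀ + KKᵀ`. For the spectral norm, identified with the `ℓ²` operator norm, the C*-identity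
`‖G‖² = ‖GGᵀ‖` and the triangle inequality conclude; for the Frobenius norm, `‖G‖_F² = tr(GGᵀ)`.
-/

open Matrix MeasureTheory ProbabilityTheory Real
open scoped BigOperators ENNReal

noncomputable section

namespace LRA

/-- The `j`-th largest singular value (1-indexed) of a real `m × n` matrix;
by convention it is `0` for `j = 0` or `j > n`. -/
noncomputable def sval {m n : ℕ} (A : Matrix (Fin m) (Fin n) ℝ) (j : ℕ) : ℝ :=
  if hj : 1 ≤ j ∧ j ≤ n then
    Real.sqrt ((by simpa using Matrix.isHermitian_conjTranspose_mul_self A :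
        (Aᵀ * A).IsHermitian).eigenvalues
      (Tuple.sort (by simpa using Matrix.isHermitian_conjTranspose_mul_self A :
        (Aᵀ * A).IsHermitian).eigenvalues
        (Fin.rev ⟨j - 1, by omega⟩)))
  else 0

/-- Spectral norm: the largest singular value. -/
noncomputable def specNorm {m n : ℕ} (A : Matrix (Fin m) (Fin n) ℝ) : ℝ := sval A 1

/-- Frobenius norm. -/
noncomputable def frobNorm {m n : ℕ} (A : Matrix (Fin m) (Fin n) ℝ) : ℝ :=
  Real.sqrt (∑ i, ∑ j, (A i j) ^ 2)

/-- The optimal Frobenius rank-`r` approximation error `(∑_{j>r} σ_j(A)²)^{1/2}`. -/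
noncomputable def frobTail {m n : ℕ} (A : Matrix (Fin m) (Fin n) ℝ) (r : ℕ) : ℝ :=
  Real.sqrt (∑ j ∈ Finset.Ioc r n, sval A j ^ 2)

/-- The four Penrose conditions. -/
def IsMoorePenrose {m n : ℕ} (A : Matrix (Fin m) (Fin n) ℝ)
    (B : Matrix (Fin n) (Fin m) ℝ) : Prop :=
  A * B * A = A ∧ B * A * B = B ∧ (A * B)ᵀ = A * B ∧ (B * A)ᵀ = B * A

open scoped Classical in
/-- The Moore–Penrose pseudoinverse. -/
noncomputable def pinv {m n : ℕ} (A : Matrix (Fin m) (Fin n) ℝ) :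
    Matrix (Fin n) (Fin m) ℝ :=
  if h : ∃ B, IsMoorePenrose A B then h.choose else 0

/-- The `r`-projective volume `∏_{j=1}^r σ_j(A)`. -/
noncomputable def pvol {m n : ℕ} (r : ℕ) (A : Matrix (Fin m) (Fin n) ℝ) : ℝ :=
  ∏ j ∈ Finset.Icc 1 r, sval A j

instance matrixMeasurableSpace {p q : ℕ} : MeasurableSpace (Matrix (Fin p) (Fin q) ℝ) :=
  MeasurableSpace.pi

/-- A random matrix all of whose entries are i.i.d. standard normal random variables. -/
def IsGaussianMatrix {Ω : Type*} [MeasurableSpace Ω] (μ : Measure Ω) {p q : ℕ}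
    (G : Ω → Matrix (Fin p) (Fin q) ℝ) : Prop :=
  Measurable G ∧
  iIndepFun (β := fun _ : Fin p × Fin q => ℝ)
    (fun ij ω => G ω ij.1 ij.2) μ ∧
  ∀ i j, Measure.map (fun ω => G ω i j) μ = gaussianReal 0 1

/-- The `k × l` submatrix of `W` with rows indexed by `I` and columns by `J`. -/
noncomputable def subm {m n k l : ℕ} (W : Matrix (Fin m) (Fin n) ℝ)
    {I : Finset (Fin m)} {J : Finset (Fin n)} (hI : I.card = k) (hJ : J.card = l) :
    Matrix (Fin k) (Fin l) ℝ :=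
  W.submatrix (fun i => ((I.orderIsoOfFin hI i : I) : Fin m))
    (fun j => ((J.orderIsoOfFin hJ j : J) : Fin n))

open scoped Matrix.Norms.L2Operator

theorem apply_le_apply_sort_rev_zero {α : Type*} [LinearOrder α] {n : ℕ} (f : Fin n → α)
    (hn : 0 < n) (i : Fin n) : f i ≤ f (Tuple.sort f (Fin.rev ⟨0, hn⟩)) := by
  have h : (Tuple.sort f).symm i ≤ Fin.rev ⟨0, hn⟩ := by
    rw [Fin.le_def]; simp only [Fin.val_rev]; omega
  simpa using Tuple.monotone_sort f h

theorem l2_opNorm_eq_norm_eigenvalues {ι : Type*} [Fintype ι] [DecidableEq ι]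
    {B : Matrix ι ι ℝ} (hB : B.IsHermitian) : ‖B‖ = ‖hB.eigenvalues‖ := by
  conv_lhs => rw [hB.spectral_theorem]
  rw [Unitary.conjStarAlgAut_apply, Matrix.mul_assoc,
    CStarRing.norm_mem_unitary_mul _ (SetLike.coe_mem _),
    CStarRing.norm_mul_mem_unitary _ (Unitary.star_mem (SetLike.coe_mem _)), l2_opNorm_diagonal]
  rfl

theorem specNorm_eq_l2_opNorm {m n : ℕ} (A : Matrix (Fin m) (Fin n) ℝ) : specNorm A = ‖A‖ := by
  rcases Nat.eq_zero_or_pos n with rfl | hn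
  · simp [specNorm, sval, Subsingleton.elim A 0]
  have hB : (Aᵀ * A).IsHermitian := by simpa using isHermitian_conjTranspose_mul_self A
  set μ := hB.eigenvalues
  have hμ : ∀ i, 0 ≤ μ i := by
    simpa using (posSemidef_conjTranspose_mul_self A).eigenvalues_nonneg
  set top := Tuple.sort μ (Fin.rev ⟨0, hn⟩)
  have hnorm : ‖μ‖ = μ top :=
    le_antisymm
      ((pi_norm_le_iff_of_nonneg (hμ top)).2 fun i => by
        rw [Real.norm_of_nonneg (hμ i)]; exact apply_le_apply_sort_rev_zero μ hn i)
      ((le_abs_self _).trans (norm_le_pi_norm μ top))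
  have hsq : ‖A‖ * ‖A‖ = μ top := by
    rw [← hnorm, ← l2_opNorm_eq_norm_eigenvalues, ← l2_opNorm_conjTranspose_mul_self,
      conjTranspose_eq_transpose_of_trivial]
  rw [specNorm, sval, dif_pos ⟨le_rfl, hn⟩, ← Real.sqrt_mul_self (norm_nonneg A), hsq]

/-- Since `0⁻¹ = 0`, the entrywise inverse `d⁻¹` is the pseudoinverse of `diagonal d`. -/
theorem isMoorePenrose_conj_diagonal {n : ℕ} {U : Matrix (Fin n) (Fin n) ℝ} (hU : Uᵀ * U = 1)
    (d : Fin n → ℝ) : IsMoorePenrose (U * diagonal d * Uᵀ) (U * diagonal d⁻¹ * Uᵀ) := by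
  have hmul : ∀ a b : Fin n → ℝ,
      U * diagonal a * Uᵀ * (U * diagonal b * Uᵀ) = U * diagonal (a * b) * Uᵀ := fun a b =>
    calc _ = U * (diagonal a * (Uᵀ * U) * diagonal b) * Uᵀ := by simp only [Matrix.mul_assoc]
      _ = _ := by rw [hU, Matrix.mul_one, diagonal_mul_diagonal]; rfl
  have hsymm : ∀ a, (U * diagonal a * Uᵀ)ᵀ = U * diagonal a * Uᵀ := fun a => by
    simp [Matrix.mul_assoc]
  refine ⟨?_, ?_, by rw [hmul, hsymm], by rw [hmul, hsymm]⟩ <;> rw [hmul, hmul]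
  · rw [show d * d⁻¹ * d = d from funext fun i => mul_inv_mul_cancel (d i)]
  · rw [show d⁻¹ * d * d⁻¹ = d⁻¹ from funext fun i => by simpa using mul_inv_mul_cancel (d i)⁻¹]

theorem IsMoorePenrose.of_transpose_mul_self {m n : ℕ} {A : Matrix (Fin m) (Fin n) ℝ}
    {B : Matrix (Fin n) (Fin n) ℝ} (hB : IsMoorePenrose (Aᵀ * A) B) (hBt : Bᵀ = B) :
    IsMoorePenrose A (B * Aᵀ) := by
  obtain ⟨h1, h2, -, h4⟩ := hB
  have hA : A * B * (Aᵀ * A) = A := by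
    have h1' : Aᵀ * (A * (B * (Aᵀ * A))) = Aᵀ * A := by simpa only [Matrix.mul_assoc] using h1
    set N := A - A * B * (Aᵀ * A)
    have hN : Nᴴ * N = 0 := by
      simp only [N, conjTranspose_eq_transpose_of_trivial, transpose_sub, transpose_mul,
        transpose_transpose, hBt, Matrix.sub_mul, Matrix.mul_sub, Matrix.mul_assoc, h1']
      abel
    exact (sub_eq_zero.1 (conjTranspose_mul_self_eq_zero.1 hN)).symm
  refine ⟨?_, ?_, ?_, ?_⟩
  · calc A * (B * Aᵀ) * A = A * B * (Aᵀ * A) := by simp only [Matrix.mul_assoc]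
      _ = A := hA
  · calc B * Aᵀ * A * (B * Aᵀ) = B * (Aᵀ * A) * B * Aᵀ := by simp only [Matrix.mul_assoc]
      _ = B * Aᵀ := by rw [h2]
  · simp only [transpose_mul, transpose_transpose, hBt, Matrix.mul_assoc]
  · rw [Matrix.mul_assoc, h4]

theorem exists_isMoorePenrose {m n : ℕ} (A : Matrix (Fin m) (Fin n) ℝ) :
    ∃ B, IsMoorePenrose A B := by
  have hB : (Aᵀ * A).IsHermitian := by simpa using isHermitian_conjTranspose_mul_self A
  set U := (hB.eigenvectorUnitary : Matrix (Fin n) (Fin n) ℝ)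
  have hU : Uᵀ * U = 1 := by
    simpa [star_eq_conjTranspose] using Unitary.coe_star_mul_self hB.eigenvectorUnitary
  have hspec : Aᵀ * A = U * diagonal hB.eigenvalues * Uᵀ := by
    simpa [star_eq_conjTranspose, Function.comp_def] using hB.spectral_theorem
  refine ⟨_, IsMoorePenrose.of_transpose_mul_self (hspec ▸ isMoorePenrose_conj_diagonal hU _) ?_⟩
  simp [Matrix.mul_assoc]

theorem isMoorePenrose_pinv {m n : ℕ} (A : Matrix (Fin m) (Fin n) ℝ) :
    IsMoorePenrose A (pinv A) := by
  rw [pinv, dif_pos (exists_isMoorePenrose A)]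
  exact (exists_isMoorePenrose A).choose_spec

theorem IsMoorePenrose.sub_mul_mul_eq {m k n : ℕ} {A : Matrix (Fin m) (Fin k) ℝ}
    {B : Matrix (Fin k) (Fin m) ℝ} (h : IsMoorePenrose A B) {M X : Matrix (Fin m) (Fin n) ℝ}
    {W : Matrix (Fin k) (Fin n) ℝ} (hM : M = A * W + X) : M - A * B * M = (1 - A * B) * X :=
  calc M - A * B * M = (1 - A * B) * (A * W + X) := by rw [← hM, Matrix.sub_mul, Matrix.one_mul]
    _ = (1 - A * B) * X := by
      rw [Matrix.mul_add, ← Matrix.mul_assoc, Matrix.sub_mul, Matrix.one_mul, h.1, sub_self,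
        Matrix.zero_mul, zero_add]

theorem mul_eq_one_of_rank_eq_card {K ι κ : Type*} [Field K] [Fintype ι] [DecidableEq ι]
    [Fintype κ] {C : Matrix ι κ K} {B : Matrix κ ι K} (hC : C.rank = Fintype.card ι)
    (h : C * B * C = C) : C * B = 1 := by
  have hsurj : Function.Surjective C.mulVecLin := by
    rw [← LinearMap.range_eq_top]
    apply Submodule.eq_top_of_finrank_eq
    rw [← Matrix.rank, hC, Module.finrank_fintype_fun_eq_card]
  refine Matrix.ext_iff_mulVec.2 fun y => ?_
  obtain ⟨x, rfl⟩ := hsurj y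
  simp only [mulVecLin_apply, mulVec_mulVec, h, Matrix.one_mul]

theorem IsMoorePenrose.isStarProjection_mul {m n : ℕ} {A : Matrix (Fin m) (Fin n) ℝ}
    {B : Matrix (Fin n) (Fin m) ℝ} (h : IsMoorePenrose A B) : IsStarProjection (A * B) where
  isIdempotentElem := by
    rw [IsIdempotentElem, ← Matrix.mul_assoc, h.1]
  isSelfAdjoint := by
    rw [IsSelfAdjoint, star_eq_conjTranspose, conjTranspose_eq_transpose_of_trivial, h.2.2.1]

theorem l2_opNorm_mul_transpose_self {ι κ : Type*} [Fintype ι] [Fintype κ] [DecidableEq ι]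
    [DecidableEq κ] (A : Matrix ι κ ℝ) : ‖A * Aᵀ‖ = ‖A‖ * ‖A‖ := by
  rw [← l2_opNorm_conjTranspose A, ← l2_opNorm_conjTranspose_mul_self,
    conjTranspose_conjTranspose, conjTranspose_eq_transpose_of_trivial]

theorem l2_opNorm_mul_of_transpose_mul_self_eq_one {ι κ ν : Type*} [Fintype ι] [Fintype κ]
    [Fintype ν] [DecidableEq κ] [DecidableEq ν] {U : Matrix ι κ ℝ} (hU : Uᵀ * U = 1)
    (X : Matrix κ ν ℝ) : ‖U * X‖ = ‖X‖ := by
  have h : ‖U * X‖ * ‖U * X‖ = ‖X‖ * ‖X‖ := by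
    rw [← l2_opNorm_conjTranspose_mul_self, ← l2_opNorm_conjTranspose_mul_self,
      conjTranspose_mul, conjTranspose_eq_transpose_of_trivial U, Matrix.mul_assoc,
      ← Matrix.mul_assoc Uᵀ, hU, Matrix.one_mul]
  exact (mul_self_inj (norm_nonneg _) (norm_nonneg _)).1 h

theorem l2_opNorm_one_sub_mul_le {ι κ : Type*} [Fintype ι] [Fintype κ] [DecidableEq ι]
    [DecidableEq κ] {P : Matrix ι ι ℝ} (hP : IsStarProjection P) (X : Matrix ι κ ℝ) :
    ‖(1 - P) * X‖ ≤ ‖X‖ :=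
  (l2_opNorm_mul _ _).trans (mul_le_of_le_one_left (norm_nonneg _) hP.one_sub.norm_le)

theorem frobNorm_nonneg {m n : ℕ} (X : Matrix (Fin m) (Fin n) ℝ) : 0 ≤ frobNorm X :=
  Real.sqrt_nonneg _

theorem frobNorm_sq_eq_trace {m n : ℕ} (X : Matrix (Fin m) (Fin n) ℝ) :
    frobNorm X ^ 2 = trace (Xᵀ * X) := by
  rw [frobNorm, Real.sq_sqrt (by positivity), trace, Finset.sum_comm]
  simp [mul_apply, sq]

theorem frobNorm_sq_eq_trace_mul_transpose {m n : ℕ} (X : Matrix (Fin m) (Fin n) ℝ) :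
    frobNorm X ^ 2 = trace (X * Xᵀ) := by
  rw [frobNorm_sq_eq_trace, trace_mul_comm]

theorem frobNorm_mul_of_transpose_mul_self_eq_one {m k n : ℕ} {U : Matrix (Fin m) (Fin k) ℝ}
    (hU : Uᵀ * U = 1) (X : Matrix (Fin k) (Fin n) ℝ) : frobNorm (U * X) = frobNorm X := by
  refine (sq_eq_sq₀ (frobNorm_nonneg _) (frobNorm_nonneg _)).1 ?_
  rw [frobNorm_sq_eq_trace, frobNorm_sq_eq_trace, transpose_mul, Matrix.mul_assoc,
    ← Matrix.mul_assoc Uᵀ, hU, Matrix.one_mul]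

theorem frobNorm_sq_mul_add_frobNorm_sq_one_sub_mul {m n : ℕ} {P : Matrix (Fin m) (Fin m) ℝ}
    (hP : IsStarProjection P) (X : Matrix (Fin m) (Fin n) ℝ) :
    frobNorm (P * X) ^ 2 + frobNorm ((1 - P) * X) ^ 2 = frobNorm X ^ 2 := by
  have hPt : ∀ Q : Matrix (Fin m) (Fin m) ℝ, IsStarProjection Q → Qᵀ * Q = Q := fun Q hQ => by
    rw [← conjTranspose_eq_transpose_of_trivial, ← star_eq_conjTranspose,
      hQ.isSelfAdjoint.star_eq, hQ.isIdempotentElem.eq]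
  simp only [frobNorm_sq_eq_trace, transpose_mul, Matrix.mul_assoc]
  rw [← Matrix.mul_assoc Pᵀ, hPt P hP, ← Matrix.mul_assoc (1 - P)ᵀ, hPt _ hP.one_sub,
    ← trace_add, ← Matrix.mul_add, ← Matrix.add_mul, add_sub_cancel, Matrix.one_mul]

theorem frobNorm_one_sub_mul_le {m n : ℕ} {P : Matrix (Fin m) (Fin m) ℝ}
    (hP : IsStarProjection P) (X : Matrix (Fin m) (Fin n) ℝ) :
    frobNorm ((1 - P) * X) ^ 2 ≤ frobNorm X ^ 2 := by
  rw [← frobNorm_sq_mul_add_frobNorm_sq_one_sub_mul hP X]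
  exact le_add_of_nonneg_left (sq_nonneg _)

theorem sub_mul_transpose_self_of_orthonormal {R k p q n : Type*} [CommRing R] [Fintype p]
    [Fintype q] [Fintype n] [DecidableEq p] [DecidableEq q]
    {X : Matrix k p R} {Y : Matrix k q R} {V1 : Matrix n q R} {V2 : Matrix n p R}
    (hV1 : V1ᵀ * V1 = 1) (hV2 : V2ᵀ * V2 = 1) (hV12 : V1ᵀ * V2 = 0) :
    (X * V2ᵀ - Y * V1ᵀ) * (X * V2ᵀ - Y * V1ᵀ)ᵀ = X * Xᵀ + Y * Yᵀ := by
  have hV21 : V2ᵀ * V1 = 0 := by simpa using congrArg transpose hV12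
  simp only [transpose_sub, transpose_mul, transpose_transpose, Matrix.sub_mul, Matrix.mul_sub,
    Matrix.mul_assoc, ← Matrix.mul_assoc V1ᵀ, ← Matrix.mul_assoc V2ᵀ, hV1, hV2, hV12, hV21,
    Matrix.one_mul, Matrix.zero_mul, Matrix.mul_zero]
  abel

theorem eq_mul_add_of_svd_of_mul_eq_one {R m n l r s t : Type*} [Ring R] [Fintype n] [Fintype l]
    [Fintype r] [Fintype s] [Fintype t] [DecidableEq r]
    {M : Matrix m n R} {U1 : Matrix m r R} {U2 : Matrix m s R} {S1 : Matrix r r R}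
    {S2 : Matrix s t R} {V1 : Matrix n r R} {V2 : Matrix n t R}
    (hSVD : M = U1 * S1 * V1ᵀ + U2 * S2 * V2ᵀ) (H : Matrix n l R) {Cp : Matrix l r R}
    (hC : V1ᵀ * H * Cp = 1) :
    M = M * H * (Cp * V1ᵀ) + U2 * (S2 * V2ᵀ - S2 * (V2ᵀ * H) * Cp * V1ᵀ) := by
  have key : U1 * S1 * V1ᵀ * H * (Cp * V1ᵀ) = U1 * S1 * V1ᵀ :=
    calc _ = U1 * S1 * (V1ᵀ * H * Cp) * V1ᵀ := by simp only [Matrix.mul_assoc]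
      _ = _ := by rw [hC, Matrix.mul_one]
  rw [hSVD, Matrix.add_mul, Matrix.add_mul, key]
  simp only [Matrix.mul_sub, Matrix.mul_assoc]
  abel

theorem rangeFinder_error_bound_general {m n l r : ℕ}
    (M : Matrix (Fin m) (Fin n) ℝ)
    (U1 : Matrix (Fin m) (Fin r) ℝ) (U2 : Matrix (Fin m) (Fin (m - r)) ℝ)
    (V1 : Matrix (Fin n) (Fin r) ℝ) (V2 : Matrix (Fin n) (Fin (n - r)) ℝ)
    (hU2 : U2ᵀ * U2 = 1)
    (hV1 : V1ᵀ * V1 = 1) (hV2 : V2ᵀ * V2 = 1) (hV12 : V1ᵀ * V2 = 0)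
    (S1 : Matrix (Fin r) (Fin r) ℝ) (S2 : Matrix (Fin (m - r)) (Fin (n - r)) ℝ)
    (hSVD : M = U1 * S1 * V1ᵀ + U2 * S2 * V2ᵀ)
    (H : Matrix (Fin n) (Fin l) ℝ)
    (C1 : Matrix (Fin r) (Fin l) ℝ) (C2 : Matrix (Fin (n - r)) (Fin l) ℝ)
    (hC1 : C1 = V1ᵀ * H) (hC2 : C2 = V2ᵀ * H) (hC1rank : C1.rank = r) :
    specNorm (M - M * H * pinv (M * H) * M) ^ 2 ≤
        specNorm S2 ^ 2 + specNorm (S2 * C2 * pinv C1) ^ 2 ∧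
    frobNorm (M - M * H * pinv (M * H) * M) ^ 2 ≤
        frobNorm S2 ^ 2 + frobNorm (S2 * C2 * pinv C1) ^ 2 := by
  subst hC1 hC2
  set P := M * H * pinv (M * H)
  set K := S2 * (V2ᵀ * H) * pinv (V1ᵀ * H)
  set G := S2 * V2ᵀ - K * V1ᵀ
  have hP : IsStarProjection P := (isMoorePenrose_pinv _).isStarProjection_mul
  have hM : M = M * H * (pinv (V1ᵀ * H) * V1ᵀ) + U2 * G :=
    eq_mul_add_of_svd_of_mul_eq_one hSVD H
      (mul_eq_one_of_rank_eq_card (by simpa using hC1rank) (isMoorePenrose_pinv _).1)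
  have hE : M - P * M = (1 - P) * (U2 * G) := (isMoorePenrose_pinv _).sub_mul_mul_eq hM
  have hG : G * Gᵀ = S2 * S2ᵀ + K * Kᵀ := sub_mul_transpose_self_of_orthonormal hV1 hV2 hV12
  rw [hE]
  constructor
  · simp only [specNorm_eq_l2_opNorm]
    calc ‖(1 - P) * (U2 * G)‖ ^ 2 ≤ ‖G‖ ^ 2 := by
          gcongr
          exact (l2_opNorm_one_sub_mul_le hP _).trans_eq
            (l2_opNorm_mul_of_transpose_mul_self_eq_one hU2 G)
      _ ≤ ‖S2‖ ^ 2 + ‖K‖ ^ 2 := by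
          simpa only [← hG, l2_opNorm_mul_transpose_self, sq] using
            norm_add_le (S2 * S2ᵀ) (K * Kᵀ)
  · calc frobNorm ((1 - P) * (U2 * G)) ^ 2 ≤ frobNorm (U2 * G) ^ 2 :=
          frobNorm_one_sub_mul_le hP _
      _ = frobNorm S2 ^ 2 + frobNorm K ^ 2 := by
          simp only [frobNorm_mul_of_transpose_mul_self_eq_one hU2,
            frobNorm_sq_eq_trace_mul_transpose, hG, trace_add]

theorem rangeFinder_error_bound {m n l r : ℕ} (hrm : r ≤ m) (hrn : r ≤ n)
    (M : Matrix (Fin m) (Fin n) ℝ)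
    (U1 : Matrix (Fin m) (Fin r) ℝ) (U2 : Matrix (Fin m) (Fin (m - r)) ℝ)
    (V1 : Matrix (Fin n) (Fin r) ℝ) (V2 : Matrix (Fin n) (Fin (n - r)) ℝ)
    (hU1 : U1ᵀ * U1 = 1) (hU2 : U2ᵀ * U2 = 1) (hU12 : U1ᵀ * U2 = 0)
    (hV1 : V1ᵀ * V1 = 1) (hV2 : V2ᵀ * V2 = 1) (hV12 : V1ᵀ * V2 = 0)
    (S1 : Matrix (Fin r) (Fin r) ℝ) (S2 : Matrix (Fin (m - r)) (Fin (n - r)) ℝ)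
    (hS1 : S1 = Matrix.diagonal fun i : Fin r => sval M ((i : ℕ) + 1))
    (hS2 : S2 = Matrix.of fun (i : Fin (m - r)) (j : Fin (n - r)) =>
      if (i : ℕ) = (j : ℕ) then sval M (r + (j : ℕ) + 1) else 0)
    (hSVD : M = U1 * S1 * V1ᵀ + U2 * S2 * V2ᵀ)
    (H : Matrix (Fin n) (Fin l) ℝ) (hH : specNorm H ≤ 1)
    (C1 : Matrix (Fin r) (Fin l) ℝ) (C2 : Matrix (Fin (n - r)) (Fin l) ℝ)
    (hC1 : C1 = V1ᵀ * H) (hC2 : C2 = V2ᵀ * H) (hC1rank : C1.rank = r) :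
    specNorm (M - M * H * pinv (M * H) * M) ^ 2 ≤
        specNorm S2 ^ 2 + specNorm (S2 * C2 * pinv C1) ^ 2 ∧
    frobNorm (M - M * H * pinv (M * H) * M) ^ 2 ≤
        frobNorm S2 ^ 2 + frobNorm (S2 * C2 * pinv C1) ^ 2 :=
  rangeFinder_error_bound_general M U1 U2 V1 V2 hU2 hV1 hV2 hV12 S1 S2 hSVD H C1 C2 hC1 hC2 hC1rank

end LRA
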